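/- arXiv:1610.00021 — 4 statements merged into one kernel-verified Lean document; each statement's English description precedes it below -/
import Mathlib

section
/- Let x ∈ ℓ₂⁺ and let G₀ ⊆ G be two graphs on vertex sets V ⊆ V' ⊆ ℕ₊. If ord(x, G₀) ∈ ℓ₂↓ then d(ord(x, G₀), ord(x, G)) ≤ sqrt(‖ord(x, G)‖₂² − ‖ord(x, G₀)‖₂²). (Aldous's comparison lemma: merging components can only change the ordered weight sequence by at most the square root of the increase of the sum of squared component weights.) -/
open MeasureTheory ProbabilityTheory Filter
open scoped ENNReal

/-- The (real-valued) total weight of the connected component `C` of `G`. -/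
noncomputable def compW {V : Type*} (x : V → ℝ) (G : SimpleGraph V)
    (C : G.ConnectedComponent) : ℝ :=
  ∑' v : {v : V // G.connectedComponentMk v = C}, x v

/-- The (extended-real-valued) total weight of the connected component `C` of `G`. -/
noncomputable def compWE {V : Type*} (x : V → ℝ) (G : SimpleGraph V)
    (C : G.ConnectedComponent) : ℝ≥0∞ :=
  ∑' v : {v : V // G.connectedComponentMk v = C}, ENNReal.ofReal (x v)

/-- `S₂^G`: the sum of the squared component weights of `G` (with weights `x`). -/
noncomputable def S2E {V : Type*} (x : V → ℝ) (G : SimpleGraph V) : ℝ≥0∞ :=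
  ∑' C : G.ConnectedComponent, compWE x G C ^ 2

/-- The decreasing rearrangement of a nonnegative family `w`: `ordOf w n` is the
`n`-th largest value (counted from `n = 0`). -/
noncomputable def ordOf {α : Type*} (w : α → ℝ) (n : ℕ) : ℝ :=
  sInf {r : ℝ | 0 ≤ r ∧ {a : α | r < w a}.Finite ∧ Nat.card {a : α | r < w a} ≤ n}

/-- `ord(x, G)`: the decreasing rearrangement of the component weights of `G`. -/
noncomputable def ordSeq {V : Type*} (x : V → ℝ) (G : SimpleGraph V) : ℕ → ℝ :=
  ordOf (compW x G)

/-- The `ℓ₂` distance between two sequences. -/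
noncomputable def l2dist (m m' : ℕ → ℝ) : ℝ :=
  Real.sqrt (∑' n, (m n - m' n) ^ 2)

/-- The `ℓ₂` distance between two sequences, with values in `ℝ≥0∞`. -/
noncomputable def l2edist (m m' : ℕ → ℝ) : ℝ≥0∞ :=
  (∑' n, ENNReal.ofReal ((m n - m' n) ^ 2)) ^ (2⁻¹ : ℝ)

/-!
Write `u = ord(x, G)` and `v = ord(x, G')`. Since `∑ (u - v)² = ∑ u² + ∑ v² - 2 ∑ u v`,
while `∑ u² = S₂^G` and `∑ v² = S₂^G'`, it suffices to show `∑ u² ≤ ∑ u v`.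
Every component `b` of `G'` is a union of components of `G` of total weight at most `w' b`.
Giving the heaviest of them the weight `w' b` and the others `0` yields a family `v'` with
`∑ w² ≤ ∑ w v'`; as `v'` is dominated by a rearrangement of `w'`, the Hardy–Littlewood
rearrangement inequality bounds `∑ w v'` by `∑ u v`. That inequality follows from the
layer-cake formula `∑ g h = ∫∫ #{g > s, h > t} ds dt`, since for decreasing rearrangements
the count is `min (#{g > s}) (#{h > t})`, the largest possible.
-/

open Set

section Rearrangement

variable {α β : Type*}

theorem ordOf_nonneg (w : α → ℝ) (n : ℕ) : 0 ≤ ordOf w n :=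
  Real.sInf_nonneg fun _ hr => hr.1

theorem ordOf_le_of_ncard_le {w : α → ℝ} {r : ℝ} {n : ℕ} (hr : 0 ≤ r)
    (hfin : {a | r < w a}.Finite) (hcard : {a | r < w a}.ncard ≤ n) : ordOf w n ≤ r :=
  csInf_le ⟨0, fun _ hs => hs.1⟩ ⟨hr, hfin, by rwa [Nat.card_coe_set_eq]⟩

theorem lt_ordOf_of_lt_ncard {w : α → ℝ} {r : ℝ} {n : ℕ} (hr : 0 ≤ r)
    (hfin : {a | r < w a}.Finite) (hcard : n < {a | r < w a}.ncard) : r < ordOf w n := by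
  obtain ⟨T, hTsub, hTcard⟩ := exists_subset_card_eq hcard
  have hTfin : T.Finite := hfin.subset hTsub
  have hTne : T.Nonempty := by rw [← ncard_pos hTfin, hTcard]; exact n.succ_pos
  obtain ⟨a₀, ha₀T, ha₀min⟩ := exists_min_image T w hTfin hTne
  set S := {r : ℝ | 0 ≤ r ∧ {a | r < w a}.Finite ∧ Nat.card {a | r < w a} ≤ n}
  -- every level below `w a₀` is exceeded by all `n + 1` elements of `T`
  have hbelow : ∀ s ∈ S, w a₀ ≤ s := by
    rintro s ⟨-, hsfin, hscard⟩
    by_contra! hs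
    have : T.ncard ≤ {a | s < w a}.ncard :=
      ncard_le_ncard (fun a ha => hs.trans_le (ha₀min a ha)) hsfin
    rw [Nat.card_coe_set_eq] at hscard
    omega
  obtain ⟨a₁, ha₁, ha₁max⟩ := exists_max_image _ w hfin ⟨a₀, hTsub ha₀T⟩
  have hnonempty : S.Nonempty := by
    have hempty : {a | w a₁ < w a} = ∅ := eq_empty_of_forall_notMem fun a ha =>
      (ha₁max a (show r < w a from ha₁.trans ha)).not_gt ha
    exact ⟨w a₁, hr.trans ha₁.le, by simp [hempty]⟩
  exact (hTsub ha₀T).trans_le (le_csInf hnonempty hbelow)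

theorem lt_ordOf_iff {w : α → ℝ} (hw : ∀ r, 0 < r → {a | r < w a}.Finite) {r : ℝ}
    (hr : 0 < r) {n : ℕ} : r < ordOf w n ↔ n < {a | r < w a}.ncard :=
  ⟨fun h => not_le.1 fun hle => (ordOf_le_of_ncard_le hr.le (hw r hr) hle).not_gt h,
    lt_ordOf_of_lt_ncard hr.le (hw r hr)⟩

theorem encard_setOf_lt_ordOf_and_lt_ordOf {w : α → ℝ} {w' : β → ℝ}
    (hw : ∀ r, 0 < r → {a | r < w a}.Finite) (hw' : ∀ r, 0 < r → {b | r < w' b}.Finite)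
    {s t : ℝ} (hs : 0 < s) (ht : 0 < t) :
    {n | s < ordOf w n ∧ t < ordOf w' n}.encard =
      min {a | s < w a}.encard {b | t < w' b}.encard := by
  have hset : {n | s < ordOf w n ∧ t < ordOf w' n} =
      Iio (min {a | s < w a}.ncard {b | t < w' b}.ncard) := by
    ext n
    simp only [mem_ofPred_eq, mem_Iio, lt_min_iff, lt_ordOf_iff hw hs, lt_ordOf_iff hw' ht]
  rw [hset, ← (finite_Iio _).cast_ncard_eq, ncard_Iio_nat, ← (hw s hs).cast_ncard_eq,
    ← (hw' t ht).cast_ncard_eq]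
  exact Nat.mono_cast.map_min

theorem tsum_ofReal_mul_eq_lintegral_encard [Countable α] {g : α → ℝ} (hg : 0 ≤ g)
    (h : α → ℝ) :
    ∑' a, ENNReal.ofReal (g a * h a) =
      ∫⁻ s in Ioi 0, ∫⁻ t in Ioi 0, ({a | s < g a ∧ t < h a}.encard : ℝ≥0∞) := by
  have hmeas : ∀ c : ℝ, Measurable ((Iio c).indicator (1 : ℝ → ℝ≥0∞)) :=
    fun c => measurable_one.indicator measurableSet_Iio
  have hlen : ∀ c : ℝ, ∫⁻ t in Ioi 0, (Iio c).indicator 1 t = ENNReal.ofReal c := by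
    intro c
    rw [lintegral_indicator_one measurableSet_Iio, Measure.restrict_apply measurableSet_Iio,
      Iio_inter_Ioi, Real.volume_Ioo, sub_zero]
  calc ∑' a, ENNReal.ofReal (g a * h a)
      = ∑' a, ∫⁻ s in Ioi 0, (Iio (g a)).indicator 1 s * ENNReal.ofReal (h a) := by
        refine tsum_congr fun a => ?_
        rw [lintegral_mul_const _ (hmeas _), hlen, ENNReal.ofReal_mul (hg a)]
    _ = ∫⁻ s in Ioi 0, ∑' a, (Iio (g a)).indicator 1 s * ENNReal.ofReal (h a) :=
        (lintegral_tsum fun a => ((hmeas _).mul_const _).aemeasurable).symm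
    _ = ∫⁻ s in Ioi 0, ∫⁻ t in Ioi 0, ∑' a,
          (Iio (g a)).indicator 1 s * (Iio (h a)).indicator 1 t := by
        refine lintegral_congr fun s => ?_
        simp_rw [← hlen (h _), ← lintegral_const_mul _ (hmeas _)]
        exact (lintegral_tsum fun a => ((hmeas _).const_mul _).aemeasurable).symm
    _ = ∫⁻ s in Ioi 0, ∫⁻ t in Ioi 0, ({a | s < g a ∧ t < h a}.encard : ℝ≥0∞) := by
        refine lintegral_congr fun s => lintegral_congr fun t => ?_
        rw [← ENNReal.tsum_set_one,
          tsum_subtype {a | s < g a ∧ t < h a} fun _ => (1 : ℝ≥0∞)]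
        refine tsum_congr fun a => ?_
        by_cases hs : s < g a <;> by_cases ht : t < h a <;> simp [hs, ht]

theorem tsum_ofReal_mul_le_of_encard_le [Countable α] [Countable β] {g h : α → ℝ}
    {g' h' : β → ℝ} (hg : 0 ≤ g) (hg' : 0 ≤ g')
    (hcard : ∀ s t : ℝ, 0 < s → 0 < t →
      {a | s < g a ∧ t < h a}.encard ≤ {b | s < g' b ∧ t < h' b}.encard) :
    ∑' a, ENNReal.ofReal (g a * h a) ≤ ∑' b, ENNReal.ofReal (g' b * h' b) := by
  rw [tsum_ofReal_mul_eq_lintegral_encard hg, tsum_ofReal_mul_eq_lintegral_encard hg']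
  refine setLIntegral_mono' measurableSet_Ioi fun s hs =>
    setLIntegral_mono' measurableSet_Ioi fun t ht => ?_
  exact_mod_cast hcard s t hs ht

theorem tsum_ofReal_mul_le_tsum_ordOf_mul [Countable α] {g h : α → ℝ} {h' : β → ℝ}
    (hg : 0 ≤ g) (hgfin : ∀ r, 0 < r → {a | r < g a}.Finite)
    (hh'fin : ∀ r, 0 < r → {b | r < h' b}.Finite)
    (hcard : ∀ t, 0 < t → {a | t < h a}.encard ≤ {b | t < h' b}.encard) :
    ∑' a, ENNReal.ofReal (g a * h a) ≤ ∑' n, ENNReal.ofReal (ordOf g n * ordOf h' n) := by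
  refine tsum_ofReal_mul_le_of_encard_le hg (ordOf_nonneg g) fun s t hs ht => ?_
  rw [encard_setOf_lt_ordOf_and_lt_ordOf hgfin hh'fin hs ht]
  exact le_min (encard_le_encard fun a ha => ha.1)
    ((encard_le_encard fun a ha => ha.2).trans (hcard t ht))

theorem tsum_ofReal_ordOf_sq [Countable α] {w : α → ℝ} (hw0 : 0 ≤ w)
    (hw : ∀ r, 0 < r → {a | r < w a}.Finite) :
    ∑' n, ENNReal.ofReal (ordOf w n ^ 2) = ∑' a, ENNReal.ofReal (w a ^ 2) := by
  simp_rw [sq]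
  rw [tsum_ofReal_mul_eq_lintegral_encard (ordOf_nonneg w),
    tsum_ofReal_mul_eq_lintegral_encard hw0]
  refine setLIntegral_congr_fun measurableSet_Ioi fun s hs =>
    setLIntegral_congr_fun measurableSet_Ioi fun t ht => ?_
  rw [encard_setOf_lt_ordOf_and_lt_ordOf hw hw hs ht]
  congr 1
  rcases le_total s t with hst | hst
  · have hsub : {a | t < w a} ⊆ {a | s < w a} := fun a ha => hst.trans_lt ha
    rw [min_eq_right (encard_le_encard hsub)]
    congr 1
    ext a
    exact ⟨fun ha => ⟨hsub ha, ha⟩, And.right⟩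
  · have hsub : {a | s < w a} ⊆ {a | t < w a} := fun a ha => hst.trans_lt ha
    rw [min_eq_left (encard_le_encard hsub)]
    congr 1
    ext a
    exact ⟨fun ha => ⟨ha, hsub ha⟩, And.left⟩

theorem exists_max_image_of_superlevel_finite {w : α → ℝ} (hw0 : 0 ≤ w)
    (hw : ∀ r, 0 < r → {a | r < w a}.Finite) {s : Set α} (hs : s.Nonempty) :
    ∃ a ∈ s, ∀ a' ∈ s, w a' ≤ w a := by
  by_cases hpos : ∃ a ∈ s, 0 < w a
  · obtain ⟨a₁, ha₁s, ha₁⟩ := hpos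
    have hfin : {a ∈ s | w a₁ ≤ w a}.Finite :=
      (hw _ (half_pos ha₁)).subset fun a ha => show w a₁ / 2 < w a by linarith [ha.2]
    obtain ⟨m, hm, hmax⟩ := exists_max_image _ w hfin ⟨a₁, ha₁s, le_rfl⟩
    refine ⟨m, hm.1, fun a ha => ?_⟩
    rcases le_total (w a₁) (w a) with h | h
    · exact hmax a ⟨ha, h⟩
    · exact h.trans (hmax a₁ ⟨ha₁s, le_rfl⟩)
  · push Not at hpos
    obtain ⟨a₀, ha₀⟩ := hs
    exact ⟨a₀, ha₀, fun a ha => (hpos a ha).trans (hw0 a₀)⟩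

theorem tsum_ofReal_sq_le_tsum_ordOf_mul [Countable α] {f : α → β} (hf : f.Surjective)
    {w : α → ℝ} {w' : β → ℝ} (hw0 : 0 ≤ w) (hw : ∀ r, 0 < r → {a | r < w a}.Finite)
    (hw' : ∀ r, 0 < r → {b | r < w' b}.Finite)
    (hfiber : ∀ b, ∑' a : f ⁻¹' {b}, ENNReal.ofReal (w a) ≤ ENNReal.ofReal (w' b)) :
    ∑' a, ENNReal.ofReal (w a ^ 2) ≤ ∑' n, ENNReal.ofReal (ordOf w n * ordOf w' n) := by
  classical
  choose top htop_mem htop_max using fun b =>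
    exists_max_image_of_superlevel_finite hw0 hw (s := f ⁻¹' {b}) (hf b)
  set v : α → ℝ := fun a => if top (f a) = a then w' (f a) else 0 with hv
  have hv_top : ∀ b, v (top b) = w' b := fun b => by
    simp only [hv, show f (top b) = b from htop_mem b, if_true]
  have hsq_le : ∑' a, ENNReal.ofReal (w a ^ 2) ≤ ∑' a, ENNReal.ofReal (w a * v a) := by
    rw [← ENNReal.tsum_fiberwise _ f, ← ENNReal.tsum_fiberwise _ f]
    refine ENNReal.tsum_le_tsum fun b => ?_
    calc ∑' a : f ⁻¹' {b}, ENNReal.ofReal (w a ^ 2)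
        ≤ ∑' a : f ⁻¹' {b}, ENNReal.ofReal (w (top b)) * ENNReal.ofReal (w a) := by
          refine ENNReal.tsum_le_tsum fun a => ?_
          rw [sq, ENNReal.ofReal_mul (hw0 a)]
          exact mul_le_mul_left (ENNReal.ofReal_le_ofReal (htop_max b a a.2)) _
      _ = ENNReal.ofReal (w (top b)) * ∑' a : f ⁻¹' {b}, ENNReal.ofReal (w a) :=
          ENNReal.tsum_mul_left
      _ ≤ ENNReal.ofReal (w (top b) * v (top b)) := by
          rw [hv_top, ENNReal.ofReal_mul (hw0 _)]
          exact mul_le_mul_right (hfiber b) _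
      _ ≤ ∑' a : f ⁻¹' {b}, ENNReal.ofReal (w a * v a) :=
          ENNReal.le_tsum (⟨top b, htop_mem b⟩ : f ⁻¹' {b})
  have hcard : ∀ t, 0 < t → {a | t < v a}.encard ≤ {b | t < w' b}.encard := by
    intro t ht
    refine (encard_le_encard fun a (ha : t < v a) => ?_).trans (encard_image_le top _)
    have htop : top (f a) = a := by
      by_contra h
      simp only [hv, h, if_false] at ha
      exact ha.not_gt ht
    exact ⟨f a, show t < w' (f a) by rwa [← hv_top, htop], htop⟩
  exact hsq_le.trans (tsum_ofReal_mul_le_tsum_ordOf_mul hw0 hw hw' hcard)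

theorem tsum_ofReal_sub_sq_le {ι : Type*} {u v : ι → ℝ} (hu : 0 ≤ u) (hv : 0 ≤ v)
    (hA : ∑' i, ENNReal.ofReal (u i ^ 2) ≠ ⊤)
    (hAC : ∑' i, ENNReal.ofReal (u i ^ 2) ≤ ∑' i, ENNReal.ofReal (u i * v i)) :
    ∑' i, ENNReal.ofReal ((u i - v i) ^ 2) ≤
      ∑' i, ENNReal.ofReal (v i ^ 2) - ∑' i, ENNReal.ofReal (u i ^ 2) := by
  set A := ∑' i, ENNReal.ofReal (u i ^ 2)
  set C := ∑' i, ENNReal.ofReal (u i * v i)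
  set D := ∑' i, ENNReal.ofReal ((u i - v i) ^ 2)
  have hpolar : D + 2 * C = A + ∑' i, ENNReal.ofReal (v i ^ 2) := by
    rw [← ENNReal.tsum_mul_left, ← ENNReal.tsum_add, ← ENNReal.tsum_add]
    refine tsum_congr fun i => ?_
    have huv : 0 ≤ u i * v i := mul_nonneg (hu i) (hv i)
    rw [← ENNReal.ofReal_ofNat 2, ← ENNReal.ofReal_mul zero_le_two,
      ← ENNReal.ofReal_add (sq_nonneg _) (by positivity),
      ← ENNReal.ofReal_add (sq_nonneg _) (sq_nonneg _)]
    ring_nf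
  refine ENNReal.le_sub_of_add_le_right hA ((ENNReal.add_le_add_iff_left hA).1 ?_)
  calc A + (D + A) = D + (A + A) := by ring
    _ ≤ D + 2 * C := by rw [two_mul]; gcongr
    _ = A + _ := hpolar

end Rearrangement

section ComponentWeights

open SimpleGraph

variable {V : Type*} {x : V → ℝ} {G : SimpleGraph V}

instance [Countable V] : Countable G.ConnectedComponent :=
  Quotient.countable

theorem compW_nonneg (hx : 0 ≤ x) (C : G.ConnectedComponent) : 0 ≤ compW x G C :=
  tsum_nonneg fun v => hx v

theorem toReal_compWE (hx : 0 ≤ x) (C : G.ConnectedComponent) :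
    (compWE x G C).toReal = compW x G C := by
  rw [compWE, ENNReal.tsum_toReal_eq fun _ => ENNReal.ofReal_ne_top]
  exact tsum_congr fun v => ENNReal.toReal_ofReal (hx v)

theorem compWE_ne_top (hS : S2E x G ≠ ⊤) (C : G.ConnectedComponent) : compWE x G C ≠ ⊤ := by
  have : compWE x G C ^ 2 ≠ ⊤ := ne_top_of_le_ne_top hS (ENNReal.le_tsum C)
  simpa using this

theorem ofReal_compW (hx : 0 ≤ x) (hS : S2E x G ≠ ⊤) (C : G.ConnectedComponent) :
    ENNReal.ofReal (compW x G C) = compWE x G C := by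
  rw [← toReal_compWE hx, ENNReal.ofReal_toReal (compWE_ne_top hS C)]

theorem S2E_eq_tsum_ofReal_compW_sq (hx : 0 ≤ x) (hS : S2E x G ≠ ⊤) :
    S2E x G = ∑' C, ENNReal.ofReal (compW x G C ^ 2) :=
  tsum_congr fun C => by rw [ENNReal.ofReal_pow (compW_nonneg hx C), ofReal_compW hx hS]

theorem finite_setOf_lt_compW (hx : 0 ≤ x) (hS : S2E x G ≠ ⊤) {r : ℝ} (hr : 0 < r) :
    {C | r < compW x G C}.Finite := by
  refine (ENNReal.finite_const_le_of_tsum_ne_top hS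
    (pow_ne_zero 2 (ENNReal.ofReal_pos.2 hr).ne')).subset fun C (hC : r < compW x G C) => ?_
  change ENNReal.ofReal r ^ 2 ≤ compWE x G C ^ 2
  rw [← ofReal_compW hx hS]
  gcongr

theorem compWE_mono {y : V → ℝ} (hxy : x ≤ y) (C : G.ConnectedComponent) :
    compWE x G C ≤ compWE y G C :=
  ENNReal.tsum_le_tsum fun v => ENNReal.ofReal_le_ofReal (hxy v)

theorem tsum_compWE_preimage_map_ofLE {G' : SimpleGraph V} (h : G ≤ G')
    (b : G'.ConnectedComponent) :
    ∑' a : ConnectedComponent.map (Hom.ofLE h) ⁻¹' {b}, compWE x G a = compWE x G' b := by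
  classical
  have hsplit : ∀ (H : SimpleGraph V) (C : H.ConnectedComponent), compWE x H C =
      ∑' v, if H.connectedComponentMk v = C then ENNReal.ofReal (x v) else 0 := fun H C => by
    rw [compWE]
    refine (tsum_subtype {v | H.connectedComponentMk v = C} fun v => ENNReal.ofReal (x v)).trans
      (tsum_congr fun v => ?_)
    simp [indicator_apply]
  simp_rw [hsplit]
  rw [ENNReal.tsum_comm]
  refine tsum_congr fun v => ?_
  by_cases hv : G'.connectedComponentMk v = b
  · rw [if_pos hv, tsum_eq_single ⟨G.connectedComponentMk v, hv⟩]
    · simp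
    · intro a ha
      rw [if_neg fun hva => ha (Subtype.ext hva.symm)]
  · rw [if_neg hv]
    refine ENNReal.tsum_eq_zero.2 fun a => if_neg fun hva => hv ?_
    rw [← a.2, ← hva]
    rfl

theorem S2E_eq_tsum_ordSeq_sq [Countable V] (hx : 0 ≤ x) (hS : S2E x G ≠ ⊤) :
    S2E x G = ∑' n, ENNReal.ofReal (ordSeq x G n ^ 2) := by
  rw [S2E_eq_tsum_ofReal_compW_sq hx hS, ordSeq,
    tsum_ofReal_ordOf_sq (compW_nonneg hx) fun _ => finite_setOf_lt_compW hx hS]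

theorem S2E_le_tsum_ordSeq_mul [Countable V] {x' : V → ℝ} (hx : 0 ≤ x) (hxx' : x ≤ x')
    {G' : SimpleGraph V} (h : G ≤ G') (hS : S2E x G ≠ ⊤) (hS' : S2E x' G' ≠ ⊤) :
    S2E x G ≤ ∑' n, ENNReal.ofReal (ordSeq x G n * ordSeq x' G' n) := by
  have hx' : 0 ≤ x' := hx.trans hxx'
  rw [S2E_eq_tsum_ofReal_compW_sq hx hS]
  refine tsum_ofReal_sq_le_tsum_ordOf_mul (ConnectedComponent.surjective_map_ofLE h)
    (compW_nonneg hx) (fun _ => finite_setOf_lt_compW hx hS)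
    (fun _ => finite_setOf_lt_compW hx' hS') fun b => ?_
  calc ∑' a : ConnectedComponent.map (Hom.ofLE h) ⁻¹' {b}, ENNReal.ofReal (compW x G a)
      = ∑' a : ConnectedComponent.map (Hom.ofLE h) ⁻¹' {b}, compWE x G a :=
        tsum_congr fun a => ofReal_compW hx hS a
    _ = compWE x G' b := tsum_compWE_preimage_map_ofLE h b
    _ ≤ compWE x' G' b := compWE_mono hxx' b
    _ = ENNReal.ofReal (compW x' G' b) := (ofReal_compW hx' hS' b).symm

end ComponentWeights

theorem stmt1_general (x : ℕ → ℝ) (hx : ∀ i, 0 ≤ x i)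
    (V V' : Set ℕ) (hVV' : V ⊆ V')
    (G G' : SimpleGraph ℕ) (hGG' : G ≤ G')
    (hord : S2E (V.indicator x) G < ⊤) :
    l2edist (ordSeq (V.indicator x) G) (ordSeq (V'.indicator x) G') ≤
      (S2E (V'.indicator x) G' - S2E (V.indicator x) G) ^ (2⁻¹ : ℝ) := by
  have hxV : 0 ≤ V.indicator x := indicator_nonneg fun i _ => hx i
  have hxVV' : V.indicator x ≤ V'.indicator x := indicator_le_indicator_of_subset hVV' hx
  by_cases hS' : S2E (V'.indicator x) G' = ⊤
  · simp [hS', hord.ne]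
  have hA := S2E_eq_tsum_ordSeq_sq hxV hord.ne
  have hB := S2E_eq_tsum_ordSeq_sq (hxV.trans hxVV') hS'
  have hAC := S2E_le_tsum_ordSeq_mul hxV hxVV' hGG' hord.ne hS'
  rw [hA] at hAC hord
  rw [l2edist, hA, hB]
  exact ENNReal.rpow_le_rpow
    (tsum_ofReal_sub_sq_le (ordOf_nonneg _) (ordOf_nonneg _) hord.ne hAC) (by norm_num)

/-- Aldous's comparison lemma: if `G ⊆ G'` (with vertex sets `V ⊆ V'`) then the `ℓ₂`
distance between the ordered component-weight sequences is bounded by the square root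
of the increase in the sum of squared component weights. -/
theorem stmt1 (x : ℕ → ℝ) (hx : ∀ i, 0 ≤ x i) (hx2 : Summable fun i => x i ^ 2)
    (V V' : Set ℕ) (hVV' : V ⊆ V')
    (G G' : SimpleGraph ℕ) (hGG' : G ≤ G')
    (hGV : ∀ i j, G.Adj i j → i ∈ V ∧ j ∈ V)
    (hG'V' : ∀ i j, G'.Adj i j → i ∈ V' ∧ j ∈ V')
    (hord : S2E (V.indicator x) G < ⊤) :
    l2edist (ordSeq (V.indicator x) G) (ordSeq (V'.indicator x) G') ≤
      (S2E (V'.indicator x) G' - S2E (V.indicator x) G) ^ (2⁻¹ : ℝ) :=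
  stmt1_general x hx V V' hVV' G G' hGG' hord
end

section
/- Let x ∈ ℓ₂⁺ with S₂ = ∑_i x_i², and let G_t be the random graph on ℕ₊ where, for independent exponential(1) variables ξ_{i,j}, the edge {i,j} is present iff ξ_{i,j} ≤ t·x_i·x_j. Then for any i ≠ j and any t < 1/S₂, the probability that i and j are connected in G_t is at most x_i·x_j·t / (1 − t·S₂). -/
open MeasureTheory ProbabilityTheory Filter
open scoped ENNReal

/-- The graphical-construction random graph on `ℕ`: the edge `{i,j}` is present
iff `ξ_{i,j} ≤ t·x_i·x_j`. -/
noncomputable def expGraph {Ω : Type*} (ξ : ℕ → ℕ → Ω → ℝ) (x : ℕ → ℝ) (t : ℝ)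
    (ω : Ω) : SimpleGraph ℕ :=
  SimpleGraph.fromRel (fun i j => ξ (min i j) (max i j) ω ≤ t * x i * x j)

/-! If `i` and `j` are connected, then for some self-avoiding path
`i = v₀, v₁, …, v_k, v_{k+1} = j` all edges `{v_m, v_{m+1}}` are present. These edges are
distinct, so by independence and `1 - e^{-s} ≤ s` this happens with probability at most
`∏ₘ t x_{v_m} x_{v_{m+1}} = t x_i x_j ∏_{1 ≤ m ≤ k} t x_{v_m}²`. A union bound over all tuples
`(v₁, …, v_k) ∈ ℕᵏ` and all `k` gives `t x_i x_j ∑_k (t S₂)^k = x_i x_j t / (1 - t S₂)`. -/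

def pathTuple {α : Type*} {k : ℕ} (a b : α) (v : Fin k → α) : Fin (k + 2) → α :=
  Fin.cons a (Fin.snoc v b)

theorem SimpleGraph.Reachable.exists_pathTuple {V : Type*} {G : SimpleGraph V} {a b : V}
    (h : G.Reachable a b) (hab : a ≠ b) :
    ∃ (k : ℕ) (v : Fin k → V), Function.Injective (pathTuple a b v) ∧
      ∀ m : Fin (k + 1), G.Adj (pathTuple a b v m.castSucc) (pathTuple a b v m.succ) := by
  classical
  obtain ⟨p, hp⟩ := h.some.toPath
  obtain ⟨k, hk⟩ : ∃ k, p.length = k + 1 :=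
    Nat.exists_eq_succ_of_ne_zero fun h0 => hab (SimpleGraph.Walk.eq_of_length_eq_zero h0)
  have hget : ∀ m : Fin (k + 2), pathTuple a b (fun m => p.getVert (m + 1)) m = p.getVert m := by
    intro m
    induction m using Fin.cases with
    | zero => simp [pathTuple]
    | succ m =>
      induction m using Fin.lastCases with
      | last => simp [pathTuple, ← hk]
      | cast m => simp [pathTuple]
  refine ⟨k, fun m => p.getVert (m + 1), fun m m' hmm => ?_, fun m => ?_⟩
  · rw [hget, hget] at hmm
    exact Fin.ext (hp.getVert_injOn (by simp; omega) (by simp; omega) hmm)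
  · rw [hget, hget]
    exact p.adj_getVert_succ (by simp; omega)


theorem prod_pathTuple_mul {α M : Type*} [CommMonoid M] {k : ℕ} (a b : α) (v : Fin k → α)
    (f : α → M) :
    ∏ m : Fin (k + 1), f (pathTuple a b v m.castSucc) * f (pathTuple a b v m.succ) =
      f a * f b * ∏ m, f (v m) ^ 2 := by
  rw [Finset.prod_mul_distrib, Fin.prod_univ_succ, Fin.prod_univ_castSucc]
  simp only [pathTuple, Fin.castSucc_zero, Fin.cons_zero, Fin.cons_succ, Fin.snoc_last,
    Fin.snoc_castSucc, ← Fin.succ_castSucc]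
  rw [Finset.prod_pow, sq]
  ac_rfl

theorem ENNReal.tsum_pi_fin_prod {α : Type*} (g : α → ℝ≥0∞) (k : ℕ) :
    ∑' v : Fin k → α, ∏ m, g (v m) = (∑' a, g a) ^ k := by
  induction k with
  | zero => simp
  | succ k ih =>
    rw [← (Fin.consEquiv fun _ => α).tsum_eq, ENNReal.tsum_prod', pow_succ', ← ih,
      ← ENNReal.tsum_mul_right]
    refine tsum_congr fun a => ?_
    simp [Fin.consEquiv, Fin.prod_univ_succ, ENNReal.tsum_mul_left]

theorem apply_min_mul_apply_max {α β : Type*} [LinearOrder α] [CommMagma β] (f : α → β)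
    (u w : α) : f (min u w) * f (max u w) = f u * f w := by
  rcases le_total u w with h | h
  · rw [min_eq_left h, max_eq_right h]
  · rw [min_eq_right h, max_eq_left h, mul_comm]

theorem injective_min_max_castSucc_succ {α : Type*} [LinearOrder α] {n : ℕ}
    {V : Fin (n + 1) → α} (hV : Function.Injective V) :
    Function.Injective fun m : Fin n =>
      (min (V m.castSucc) (V m.succ), max (V m.castSucc) (V m.succ)) := by
  intro m m' h
  have hsym : s(V m.castSucc, V m.succ) = s(V m'.castSucc, V m'.succ) :=
    Sym2.inf_eq_inf_and_sup_eq_sup.mp ⟨congrArg Prod.fst h, congrArg Prod.snd h⟩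
  rcases Sym2.eq_iff.mp hsym with ⟨h₁, -⟩ | ⟨h₁, h₂⟩
  · exact Fin.castSucc_injective _ (hV h₁)
  · have e₁ := congrArg Fin.val (hV h₁)
    have e₂ := congrArg Fin.val (hV h₂)
    simp only [Fin.val_castSucc, Fin.val_succ] at e₁ e₂
    omega

theorem expGraph_adj {Ω : Type*} {ξ : ℕ → ℕ → Ω → ℝ} {x : ℕ → ℝ} {t : ℝ} {ω : Ω} {u w : ℕ} :
    (expGraph ξ x t ω).Adj u w ↔ u ≠ w ∧ ξ (min u w) (max u w) ω ≤ t * x u * x w := by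
  rw [expGraph, SimpleGraph.fromRel_adj, min_comm w, max_comm w, mul_right_comm t (x w),
    or_self]

section ExponentialEdges

variable {Ω : Type*} [MeasurableSpace Ω] {μ : Measure Ω} [IsProbabilityMeasure μ]

theorem measure_le_le_ofReal_of_tail_eq_exp {f : Ω → ℝ} (hf : Measurable f) {c : ℝ}
    (h : μ {ω | c < f ω} = ENNReal.ofReal (Real.exp (-c))) :
    μ {ω | f ω ≤ c} ≤ ENNReal.ofReal c := by
  have hcompl : {ω | f ω ≤ c} = {ω | c < f ω}ᶜ := by
    ext ω
    simp
  rw [hcompl, prob_compl_eq_one_sub (measurableSet_lt measurable_const hf), h, ← ENNReal.ofReal_one,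
    ← ENNReal.ofReal_sub _ (Real.exp_nonneg _)]
  exact ENNReal.ofReal_le_ofReal (by linarith [Real.add_one_le_exp (-c)])

theorem measure_forall_le_le_prod_of_iIndepFun {ι : Type*} {η : ι → Ω → ℝ}
    (hη : ∀ a, Measurable (η a)) (hind : iIndepFun η μ) {n : ℕ} {P : Fin n → ι}
    (hP : Function.Injective P) {c : Fin n → ℝ}
    (htail : ∀ m, μ {ω | c m < η (P m) ω} = ENNReal.ofReal (Real.exp (-c m))) :
    μ {ω | ∀ m, η (P m) ω ≤ c m} ≤ ∏ m, ENNReal.ofReal (c m) := by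
  have hprod := (hind.precomp hP).measure_inter_preimage_eq_mul Finset.univ
    (sets := fun m => Set.Iic (c m)) fun _ _ => measurableSet_Iic
  have hset : {ω | ∀ m, η (P m) ω ≤ c m} = ⋂ m ∈ Finset.univ, η (P m) ⁻¹' Set.Iic (c m) := by
    ext ω
    simp
  rw [hset, hprod]
  exact Finset.prod_le_prod' fun m _ => measure_le_le_ofReal_of_tail_eq_exp (hη _) (htail m)

theorem measure_forall_adj_expGraph_le {x : ℕ → ℝ} (hx : ∀ i, 0 ≤ x i)
    {ξ : ℕ → ℕ → Ω → ℝ} (hmeas : ∀ i j, Measurable (ξ i j))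
    (hlaw : ∀ i j, i < j → ∀ s : ℝ, 0 ≤ s →
      μ {ω | s < ξ i j ω} = ENNReal.ofReal (Real.exp (-s)))
    (hindep : iIndepFun (fun p : {p : ℕ × ℕ // p.1 < p.2} => ξ p.1.1 p.1.2) μ)
    {t : ℝ} (ht : 0 ≤ t) {k : ℕ} {V : Fin (k + 1) → ℕ} (hV : Function.Injective V) :
    μ {ω | ∀ m : Fin k, (expGraph ξ x t ω).Adj (V m.castSucc) (V m.succ)} ≤
      ∏ m : Fin k, ENNReal.ofReal (t * x (V m.castSucc) * x (V m.succ)) := by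
  let P : Fin k → {p : ℕ × ℕ // p.1 < p.2} := fun m =>
    ⟨(min (V m.castSucc) (V m.succ), max (V m.castSucc) (V m.succ)),
      min_lt_max.mpr (hV.ne Fin.castSucc_lt_succ.ne)⟩
  have hP : Function.Injective P := fun m m' h =>
    injective_min_max_castSucc_succ hV (congrArg Subtype.val h)
  have hthreshold : ∀ m, t * x (P m).1.1 * x (P m).1.2 = t * x (V m.castSucc) * x (V m.succ) :=
    fun m => by rw [mul_assoc, apply_min_mul_apply_max, ← mul_assoc]
  refine (measure_mono fun ω (hω : ∀ m : Fin k, _) m => (expGraph_adj.mp (hω m)).2).trans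
    (measure_forall_le_le_prod_of_iIndepFun (fun p => hmeas _ _) hindep hP fun m => ?_)
  rw [← hthreshold]
  exact hlaw _ _ (P m).2 _ (mul_nonneg (mul_nonneg ht (hx _)) (hx _))

end ExponentialEdges

theorem measure_reachable_expGraph_le_tsum {Ω : Type*} [MeasurableSpace Ω] {μ : Measure Ω}
    [IsProbabilityMeasure μ] {x : ℕ → ℝ} (hx : ∀ i, 0 ≤ x i)
    {ξ : ℕ → ℕ → Ω → ℝ} (hmeas : ∀ i j, Measurable (ξ i j))
    (hlaw : ∀ i j, i < j → ∀ s : ℝ, 0 ≤ s →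
      μ {ω | s < ξ i j ω} = ENNReal.ofReal (Real.exp (-s)))
    (hindep : iIndepFun (fun p : {p : ℕ × ℕ // p.1 < p.2} => ξ p.1.1 p.1.2) μ)
    {t : ℝ} (ht : 0 ≤ t) {i j : ℕ} (hij : i ≠ j) :
    μ {ω | (expGraph ξ x t ω).Reachable i j} ≤
      ∑' σ : Σ k, Fin k → ℕ, ∏ m : Fin (σ.1 + 1),
        ENNReal.ofReal (t * x (pathTuple i j σ.2 m.castSucc) * x (pathTuple i j σ.2 m.succ)) := by
  let pathEvent : (Σ k, Fin k → ℕ) → Set Ω := fun σ =>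
    {ω | Function.Injective (pathTuple i j σ.2) ∧
      ∀ m : Fin (σ.1 + 1), (expGraph ξ x t ω).Adj (pathTuple i j σ.2 m.castSucc) (pathTuple i j σ.2 m.succ)}
  have hcover : {ω | (expGraph ξ x t ω).Reachable i j} ⊆ ⋃ σ, pathEvent σ := fun ω hω =>
    let ⟨k, v, hinj, hadj⟩ := SimpleGraph.Reachable.exists_pathTuple hω hij
    Set.mem_iUnion.mpr ⟨⟨k, v⟩, hinj, hadj⟩
  refine (measure_mono hcover).trans ((measure_iUnion_le _).trans
    (ENNReal.tsum_le_tsum fun σ => ?_))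
  by_cases hinj : Function.Injective (pathTuple i j σ.2)
  · simp only [pathEvent, hinj, true_and]
    exact measure_forall_adj_expGraph_le hx hmeas hlaw hindep ht hinj
  · simp [pathEvent, hinj]

/-- For `x ∈ ℓ₂⁺` and i.i.d. exponential(1) variables `ξ_{i,j}`, in the random graph
`G_t` (edge `{i,j}` iff `ξ_{i,j} ≤ t x_i x_j`), for `i ≠ j` and `t < 1/S₂` the
probability that `i` and `j` are connected is at most `x_i x_j t / (1 - t S₂)`. -/
theorem stmt2 {Ω : Type*} [MeasurableSpace Ω] (μ : Measure Ω) [IsProbabilityMeasure μ]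
    (x : ℕ → ℝ) (hx : ∀ i, 0 ≤ x i) (hx2 : Summable fun i => x i ^ 2)
    (ξ : ℕ → ℕ → Ω → ℝ) (hmeas : ∀ i j, Measurable (ξ i j))
    (hlaw : ∀ i j, i < j → ∀ s : ℝ, 0 ≤ s →
      μ {ω | s < ξ i j ω} = ENNReal.ofReal (Real.exp (-s)))
    (hindep : iIndepFun
      (fun p : {p : ℕ × ℕ // p.1 < p.2} => ξ p.1.1 p.1.2) μ)
    (t : ℝ) (ht : 0 ≤ t) (hts : t * (∑' i, x i ^ 2) < 1)
    (i j : ℕ) (hij : i ≠ j) :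
    μ {ω | (expGraph ξ x t ω).Reachable i j} ≤
      ENNReal.ofReal (x i * x j * t / (1 - t * ∑' i, x i ^ 2)) := by
  set S₂ := ∑' n, x n ^ 2
  let y : ℕ → ℝ≥0∞ := fun n => ENNReal.ofReal (Real.sqrt t * x n)
  have hedge : ∀ u w, ENNReal.ofReal (t * x u * x w) = y u * y w := fun u w => by
    rw [← ENNReal.ofReal_mul (mul_nonneg (Real.sqrt_nonneg t) (hx u)),
      mul_mul_mul_comm, Real.mul_self_sqrt ht, mul_assoc]
  have hsq : ∑' n, y n ^ 2 = ENNReal.ofReal (t * S₂) := by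
    simp_rw [y, ← ENNReal.ofReal_pow (mul_nonneg (Real.sqrt_nonneg t) (hx _)), mul_pow,
      Real.sq_sqrt ht]
    rw [← ENNReal.ofReal_tsum_of_nonneg (fun n => mul_nonneg ht (sq_nonneg _)) (hx2.mul_left t),
      tsum_mul_left]
  calc μ {ω | (expGraph ξ x t ω).Reachable i j}
      ≤ ∑' σ : Σ k, Fin k → ℕ, y i * y j * ∏ m, y (σ.2 m) ^ 2 := by
        simpa only [hedge, prod_pathTuple_mul] using
          measure_reachable_expGraph_le_tsum hx hmeas hlaw hindep ht hij
    _ = y i * y j * ∑' k, (∑' n, y n ^ 2) ^ k := by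
        simp only [ENNReal.tsum_sigma', ENNReal.tsum_mul_left,
          ENNReal.tsum_pi_fin_prod fun n => y n ^ 2]
    _ = ENNReal.ofReal (x i * x j * t) * (1 - ENNReal.ofReal (t * S₂))⁻¹ := by
        rw [hsq, ENNReal.tsum_geometric, ← hedge, show t * x i * x j = x i * x j * t by ring]
    _ = ENNReal.ofReal (x i * x j * t / (1 - t * S₂)) := by
        rw [ENNReal.ofReal_div_of_pos (by linarith), div_eq_mul_inv,
          ENNReal.ofReal_sub _ (by positivity), ENNReal.ofReal_one]
end

section
/- In the random graph G_t built from weights x ∈ ℓ₂⁺ (edge {i,j} present with probability 1 − exp(−t x_i x_j), independently), if the initial sum of squares S₂^{G₀} = ∑_i x_i² satisfies S₂^{G₀} ≤ 1/(2t), then the expected sum of squared component weights satisfies E[S₂^{G_t}] ≤ 2·S₂^{G₀}. -/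
open MeasureTheory ProbabilityTheory Filter
open scoped ENNReal

/-!
Expanding the squares, `S₂^G = ∑_{u,v} x_u x_v 1[u ↔ v]`. If `u ↔ v` in `G_t`, some path of the
complete graph from `u` to `v` is open; its edges are distinct, so by independence and
`1 - e^{-y} ≤ y` it is open with probability at most `∏ t x_a x_b` over its edges. Multiplied by
`x_u x_v`, this is `x_u²` times `∏ t x_a²` over the remaining vertices of the path, and summing over
all paths gives `E[S₂^{G_t}] ≤ S ∑_n (tS)^n = S / (1 - tS) ≤ 2S` for `S = ∑ x_i²` and `tS ≤ 1/2`.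
-/

open SimpleGraph

section ComponentWeights

variable {V : Type*} (x : V → ℝ) (G : SimpleGraph V)

def SimpleGraph.ConnectedComponent.sigmaPairsEquiv :
    (Σ C : G.ConnectedComponent,
      {a // G.connectedComponentMk a = C} × {b // G.connectedComponentMk b = C}) ≃
      {p : V × V | G.Reachable p.1 p.2} where
  toFun q := ⟨(q.2.1, q.2.2), ConnectedComponent.exact (q.2.1.2.trans q.2.2.2.symm)⟩
  invFun p := ⟨G.connectedComponentMk p.1.1, ⟨p.1.1, rfl⟩,
    ⟨p.1.2, (ConnectedComponent.sound p.2).symm⟩⟩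
  left_inv := by
    rintro ⟨C, ⟨a, rfl⟩, b⟩
    rfl

lemma compWE_sq (C : G.ConnectedComponent) :
    compWE x G C ^ 2 = ∑' q : {a // G.connectedComponentMk a = C} ×
      {b // G.connectedComponentMk b = C}, ENNReal.ofReal (x q.1) * ENNReal.ofReal (x q.2) := by
  rw [sq, compWE, ENNReal.tsum_prod (f := fun a b : {v // G.connectedComponentMk v = C} =>
    ENNReal.ofReal (x a) * ENNReal.ofReal (x b)), ← ENNReal.tsum_mul_right]
  exact tsum_congr fun a => ENNReal.tsum_mul_left.symm

theorem S2E_eq_tsum_reachable :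
    S2E x G = ∑' p : V × V, {p : V × V | G.Reachable p.1 p.2}.indicator
      (fun p => ENNReal.ofReal (x p.1) * ENNReal.ofReal (x p.2)) p := by
  rw [← tsum_subtype, ← (ConnectedComponent.sigmaPairsEquiv G).tsum_eq, S2E,
    ENNReal.tsum_sigma']
  exact tsum_congr fun C => compWE_sq x G C

end ComponentWeights

section Counting

variable {V : Type*}

theorem ENNReal.tsum_fin_prod_eq_pow (f : V → ℝ≥0∞) (n : ℕ) :
    ∑' g : Fin n → V, ∏ i, f (g i) = (∑' a, f a) ^ n := by
  induction n with
  | zero => simp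
  | succ n ih =>
    rw [← (Fin.consEquiv fun _ => V).tsum_eq]
    simp only [Fin.consEquiv_apply, Fin.prod_univ_succ, Fin.cons_zero, Fin.cons_succ]
    rw [ENNReal.tsum_prod (f := fun a (g : Fin n → V) => f a * ∏ i, f (g i)), pow_succ', ← ih,
      ← ENNReal.tsum_mul_right]
    exact tsum_congr fun a => ENNReal.tsum_mul_left

theorem ENNReal.tsum_list_prod_map (f : V → ℝ≥0∞) :
    ∑' l : List V, (l.map f).prod = (1 - ∑' a, f a)⁻¹ := by
  rw [← ENNReal.tsum_geometric, ← List.equivSigmaTuple.symm.tsum_eq, ENNReal.tsum_sigma']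
  refine tsum_congr fun n => ?_
  rw [← ENNReal.tsum_fin_prod_eq_pow]
  refine tsum_congr fun g => ?_
  simp [List.equivSigmaTuple, List.prod_ofFn]

instance SimpleGraph.Walk.countable [Countable V] {G : SimpleGraph V} {u v : V} :
    Countable (G.Walk u v) :=
  Walk.support_injective.countable

theorem SimpleGraph.Walk.mul_prod_map_edges_le {G : SimpleGraph V} (X : V → ℝ≥0∞)
    (p : Sym2 V → ℝ≥0∞) (c : ℝ≥0∞) (hp : ∀ a b, G.Adj a b → p s(a, b) ≤ c * X a * X b) :
    ∀ {u v : V} (w : G.Walk u v),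
      X u * X v * (w.edges.map p).prod ≤ X u ^ 2 * (w.support.tail.map fun a => c * X a ^ 2).prod
  | _, _, .nil => by simp [sq]
  | u, v, .cons (v := a) h w => by
    have ih := mul_prod_map_edges_le X p c hp w
    calc X u * X v * ((Walk.cons h w).edges.map p).prod
        = X u * X v * p s(u, a) * (w.edges.map p).prod := by simp [mul_assoc]
      _ ≤ X u * X v * (c * X u * X a) * (w.edges.map p).prod := by gcongr; exact hp u a h
      _ = c * X u ^ 2 * (X a * X v * (w.edges.map p).prod) := by ring
      _ ≤ c * X u ^ 2 * (X a ^ 2 * (w.support.tail.map fun a => c * X a ^ 2).prod) := by gcongr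
      _ = X u ^ 2 * ((Walk.cons h w).support.tail.map fun a => c * X a ^ 2).prod := by
        rw [Walk.support_cons, List.tail_cons, ← w.cons_tail_support]
        simp only [List.tail_cons, List.map_cons, List.prod_cons]
        ring

theorem SimpleGraph.Walk.tsum_tsum_support_tail_le {G : SimpleGraph V} (u : V)
    (P : ∀ v, G.Walk u v → Prop) (f : List V → ℝ≥0∞) :
    ∑' (v : V) (w : {w : G.Walk u v // P v w}), f w.1.support.tail ≤ ∑' l, f l := by
  rw [← ENNReal.tsum_sigma' (f := fun w : Σ v, {w : G.Walk u v // P v w} => f w.2.1.support.tail)]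
  refine ENNReal.tsum_comp_le_tsum_of_injective
    (f := fun w : Σ v, {w : G.Walk u v // P v w} => w.2.1.support.tail) ?_ f
  intro ⟨v, w, _⟩ ⟨v', w', _⟩ h
  have hs : w.support = w'.support := by
    rw [← w.cons_tail_support, ← w'.cons_tail_support]
    exact congrArg _ h
  have hv : v = v' := by
    simpa [List.getLast?_eq_some_getLast, Walk.getLast_support] using congrArg List.getLast? hs
  subst hv
  have := Walk.ext_support hs
  subst this
  rfl

end Counting

section RandomGraph

variable {Ω : Type*} [MeasurableSpace Ω] (μ : Measure Ω)

-- The sets `s i` need not be measurable; the bound passes through their measurable hulls.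
theorem MeasureTheory.lintegral_tsum_indicator_le {ι : Type*} [Countable ι] (s : ι → Set Ω)
    (c : ι → ℝ≥0∞) :
    ∫⁻ ω, ∑' i, (s i).indicator (fun _ => c i) ω ∂μ ≤ ∑' i, c i * μ (s i) :=
  calc ∫⁻ ω, ∑' i, (s i).indicator (fun _ => c i) ω ∂μ
      ≤ ∫⁻ ω, ∑' i, (toMeasurable μ (s i)).indicator (fun _ => c i) ω ∂μ :=
        lintegral_mono fun ω => ENNReal.tsum_le_tsum fun i =>
          Set.indicator_le_indicator_of_subset (subset_toMeasurable μ _) (fun _ => zero_le) ω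
    _ = ∑' i, c i * μ (s i) := by
        rw [lintegral_tsum fun i =>
          (measurable_const.indicator (measurableSet_toMeasurable μ _)).aemeasurable]
        simp [lintegral_indicator_const (measurableSet_toMeasurable μ _), measure_toMeasurable]

variable {V : Type*} (G : Ω → SimpleGraph V)

def IndepEdges : Prop :=
  iIndepSet (fun e : (⊤ : SimpleGraph V).edgeSet => {ω | (e : Sym2 V) ∈ (G ω).edgeSet}) μ

theorem measure_reachable_le_tsum_isPath [Countable V] (u v : V) :
    μ {ω | (G ω).Reachable u v} ≤
      ∑' w : {w : (⊤ : SimpleGraph V).Walk u v // w.IsPath},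
        μ {ω | ∀ e ∈ w.1.edges, e ∈ (G ω).edgeSet} := by
  classical
  refine (measure_mono ?_).trans (measure_iUnion_le _)
  rintro ω ⟨p⟩
  refine Set.mem_iUnion.2
    ⟨⟨p.bypass.mapLe le_top, (Walk.isPath_mapLe le_top).2 p.bypass_isPath⟩, ?_⟩
  simpa using fun e he => p.bypass.edges_subset_edgeSet he

variable {μ G}

theorem measure_forall_mem_edges_eq_prod (hindep : IndepEdges μ G) {u v : V}
    (w : (⊤ : SimpleGraph V).Walk u v) (hw : w.IsTrail) :
    μ {ω | ∀ e ∈ w.edges, e ∈ (G ω).edgeSet} =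
      (w.edges.map fun e => μ {ω | e ∈ (G ω).edgeSet}).prod := by
  classical
  have key := iIndepSet.meas_biInter hindep
    (w.edges.toFinset.subtype (· ∈ (⊤ : SimpleGraph V).edgeSet))
  rw [Finset.prod_subtype_of_mem (fun e => μ {ω | e ∈ (G ω).edgeSet})
    (fun e he => w.edges_subset_edgeSet (List.mem_toFinset.1 he)),
    List.prod_toFinset _ hw.edges_nodup] at key
  rw [← key]
  congr 1
  ext ω
  simpa using ⟨fun h e _ he => h e he,
    fun h e he => h e (not_isDiag_of_mem_edgeSet _ (w.edges_subset_edgeSet he)) he⟩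

theorem mul_measure_reachable_le [Countable V] (hindep : IndepEdges μ G)
    (X : V → ℝ≥0∞) (c : ℝ≥0∞) (hedge : ∀ a b, a ≠ b → μ {ω | (G ω).Adj a b} ≤ c * X a * X b)
    (u v : V) :
    X u * X v * μ {ω | (G ω).Reachable u v} ≤
      ∑' w : {w : (⊤ : SimpleGraph V).Walk u v // w.IsPath},
        X u ^ 2 * (w.1.support.tail.map fun a => c * X a ^ 2).prod :=
  calc X u * X v * μ {ω | (G ω).Reachable u v}
      ≤ X u * X v * ∑' w : {w : (⊤ : SimpleGraph V).Walk u v // w.IsPath},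
          μ {ω | ∀ e ∈ w.1.edges, e ∈ (G ω).edgeSet} := by
        gcongr
        exact measure_reachable_le_tsum_isPath μ G u v
    _ = ∑' w : {w : (⊤ : SimpleGraph V).Walk u v // w.IsPath},
          X u * X v * (w.1.edges.map fun e => μ {ω | e ∈ (G ω).edgeSet}).prod := by
        rw [← ENNReal.tsum_mul_left]
        exact tsum_congr fun w => by rw [measure_forall_mem_edges_eq_prod hindep w.1 w.2.isTrail]
    _ ≤ _ := ENNReal.tsum_le_tsum fun w =>
        w.1.mul_prod_map_edges_le X _ c fun a b h => by simpa using hedge a b h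

theorem lintegral_S2E_le [Countable V] (hindep : IndepEdges μ G) (x : V → ℝ) (c : ℝ≥0∞)
    (hedge : ∀ a b, a ≠ b →
      μ {ω | (G ω).Adj a b} ≤ c * ENNReal.ofReal (x a) * ENNReal.ofReal (x b)) :
    ∫⁻ ω, S2E x (G ω) ∂μ ≤
      (∑' a, ENNReal.ofReal (x a) ^ 2) * (1 - c * ∑' a, ENNReal.ofReal (x a) ^ 2)⁻¹ := by
  set X := fun a => ENNReal.ofReal (x a)
  calc ∫⁻ ω, S2E x (G ω) ∂μ
      = ∫⁻ ω, ∑' p : V × V,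
          {ω | (G ω).Reachable p.1 p.2}.indicator (fun _ => X p.1 * X p.2) ω ∂μ := by
        simp only [S2E_eq_tsum_reachable]
        rfl
    _ ≤ ∑' p : V × V, X p.1 * X p.2 * μ {ω | (G ω).Reachable p.1 p.2} :=
        lintegral_tsum_indicator_le μ _ _
    _ ≤ ∑' (u : V) (v : V) (w : {w : (⊤ : SimpleGraph V).Walk u v // w.IsPath}),
          X u ^ 2 * (w.1.support.tail.map fun a => c * X a ^ 2).prod := by
        rw [ENNReal.tsum_prod (f := fun u v => X u * X v * μ {ω | (G ω).Reachable u v})]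
        exact ENNReal.tsum_le_tsum fun u => ENNReal.tsum_le_tsum fun v =>
          mul_measure_reachable_le hindep X c hedge u v
    _ = ∑' u, X u ^ 2 * ∑' (v : V) (w : {w : (⊤ : SimpleGraph V).Walk u v // w.IsPath}),
          (w.1.support.tail.map fun a => c * X a ^ 2).prod := by
        simp_rw [ENNReal.tsum_mul_left]
    _ ≤ ∑' u, X u ^ 2 * ∑' l : List V, (l.map fun a => c * X a ^ 2).prod := by
        gcongr with u
        exact Walk.tsum_tsum_support_tail_le u _ _
    _ = _ := by
        rw [ENNReal.tsum_list_prod_map, ENNReal.tsum_mul_left, ENNReal.tsum_mul_right]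

end RandomGraph

section OrderedVertices

variable {α : Type*} [LinearOrder α]

lemma Sym2.inf_lt_sup_of_mem_edgeSet_top {e : Sym2 α} (he : e ∈ (⊤ : SimpleGraph α).edgeSet) :
    e.inf < e.sup := by
  induction e using Sym2.ind with
  | _ a b => simpa [inf_lt_sup, eq_comm] using he

def orientEdge (e : (⊤ : SimpleGraph α).edgeSet) : {p : α × α // p.1 < p.2} :=
  ⟨(e.1.inf, e.1.sup), Sym2.inf_lt_sup_of_mem_edgeSet_top e.2⟩

lemma orientEdge_injective : Function.Injective (orientEdge (α := α)) := by
  intro e e' h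
  simp only [orientEdge, Subtype.mk.injEq, Prod.mk.injEq] at h
  exact Subtype.ext (Sym2.inf_eq_inf_and_sup_eq_sup.1 h)

lemma SimpleGraph.adj_inf_sup_iff (G : SimpleGraph α) (e : Sym2 α) :
    G.Adj e.inf e.sup ↔ e ∈ G.edgeSet := by
  induction e using Sym2.ind with
  | _ a b => rcases le_total a b with h | h <;> simp [h, G.adj_comm]

variable {Ω : Type*} [MeasurableSpace Ω] {μ : Measure Ω} {G : Ω → SimpleGraph α}

theorem iIndepSet_edgeSet_top_of_lt
    (hindep : iIndepSet (fun p : {p : α × α // p.1 < p.2} => {ω | (G ω).Adj p.1.1 p.1.2}) μ) :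
    IndepEdges μ G := by
  unfold IndepEdges
  convert hindep.precomp orientEdge_injective using 1
  ext e ω
  exact ((G ω).adj_inf_sup_iff e.1).symm

theorem measure_adj_le_of_measure_adj_eq {x : α → ℝ} (hx : ∀ i, 0 ≤ x i) {t : ℝ} (ht : 0 ≤ t)
    (hprob : ∀ i j : α, i < j →
      μ {ω | (G ω).Adj i j} = ENNReal.ofReal (1 - Real.exp (-(t * x i * x j))))
    (a b : α) (hab : a ≠ b) :
    μ {ω | (G ω).Adj a b} ≤ ENNReal.ofReal t * ENNReal.ofReal (x a) * ENNReal.ofReal (x b) := by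
  have key : ∀ i j, i < j →
      μ {ω | (G ω).Adj i j} ≤ ENNReal.ofReal t * ENNReal.ofReal (x i) * ENNReal.ofReal (x j) := by
    intro i j hij
    rw [hprob i j hij, ← ENNReal.ofReal_mul ht, ← ENNReal.ofReal_mul (mul_nonneg ht (hx i))]
    exact ENNReal.ofReal_le_ofReal (by linarith [Real.add_one_le_exp (-(t * x i * x j))])
  rcases hab.lt_or_gt with h | h
  · exact key a b h
  · simp_rw [(G _).adj_comm a b]
    exact (key b a h).trans_eq (by ring)

end OrderedVertices

lemma ENNReal.inv_one_sub_le_two {r : ℝ≥0∞} (hr : r ≤ 2⁻¹) : (1 - r)⁻¹ ≤ 2 := by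
  calc (1 - r)⁻¹ ≤ (1 - 2⁻¹)⁻¹ := by gcongr
    _ = 2 := by rw [ENNReal.one_sub_inv_two, inv_inv]

theorem stmt3_general {Ω : Type*} [MeasurableSpace Ω] (μ : Measure Ω)
    (x : ℕ → ℝ) (hx : ∀ i, 0 ≤ x i) (hx2 : Summable fun i => x i ^ 2)
    (t : ℝ) (ht : 0 ≤ t)
    (G : Ω → SimpleGraph ℕ)
    (hprob : ∀ i j : ℕ, i < j →
      μ {ω | (G ω).Adj i j} = ENNReal.ofReal (1 - Real.exp (-(t * x i * x j))))
    (hindep : iIndepSet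
      (fun p : {p : ℕ × ℕ // p.1 < p.2} => {ω | (G ω).Adj p.1.1 p.1.2}) μ)
    (hsmall : (∑' i, x i ^ 2) * (2 * t) ≤ 1) :
    ∫⁻ ω, S2E x (G ω) ∂μ ≤ ENNReal.ofReal (2 * ∑' i, x i ^ 2) := by
  set S := ∑' i, x i ^ 2
  have hS : ∑' i, ENNReal.ofReal (x i) ^ 2 = ENNReal.ofReal S := by
    rw [ENNReal.ofReal_tsum_of_nonneg (fun i => sq_nonneg _) hx2]
    exact tsum_congr fun i => (ENNReal.ofReal_pow (hx i) 2).symm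
  have htS : ENNReal.ofReal t * ENNReal.ofReal S ≤ 2⁻¹ := by
    rw [← ENNReal.ofReal_mul ht, ← ENNReal.ofReal_ofNat 2, ← ENNReal.ofReal_inv_of_pos two_pos]
    exact ENNReal.ofReal_le_ofReal (by linarith)
  calc ∫⁻ ω, S2E x (G ω) ∂μ
      ≤ ENNReal.ofReal S * (1 - ENNReal.ofReal t * ENNReal.ofReal S)⁻¹ := by
        simpa only [hS] using lintegral_S2E_le (iIndepSet_edgeSet_top_of_lt hindep) x _
          (measure_adj_le_of_measure_adj_eq hx ht hprob)
    _ ≤ ENNReal.ofReal S * 2 := by gcongr; exact ENNReal.inv_one_sub_le_two htS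
    _ = ENNReal.ofReal (2 * S) := by
        rw [ENNReal.ofReal_mul zero_le_two, mul_comm, ENNReal.ofReal_ofNat]

/-- If each edge `{i,j}` is present independently with probability `1 - exp(-t x_i x_j)`
and `S₂^{G₀} = ∑ x_i² ≤ 1/(2t)`, then `E[S₂^{G_t}] ≤ 2 S₂^{G₀}`. -/
theorem stmt3 {Ω : Type*} [MeasurableSpace Ω] (μ : Measure Ω) [IsProbabilityMeasure μ]
    (x : ℕ → ℝ) (hx : ∀ i, 0 ≤ x i) (hx2 : Summable fun i => x i ^ 2)
    (t : ℝ) (ht : 0 ≤ t)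
    (G : Ω → SimpleGraph ℕ)
    (hprob : ∀ i j : ℕ, i < j →
      μ {ω | (G ω).Adj i j} = ENNReal.ofReal (1 - Real.exp (-(t * x i * x j))))
    (hindep : iIndepSet
      (fun p : {p : ℕ × ℕ // p.1 < p.2} => {ω | (G ω).Adj p.1.1 p.1.2}) μ)
    (hsmall : (∑' i, x i ^ 2) * (2 * t) ≤ 1) :
    ∫⁻ ω, S2E x (G ω) ∂μ ≤ ENNReal.ofReal (2 * ∑' i, x i ^ 2) :=
  stmt3_general μ x hx hx2 t ht G hprob hindep hsmall
end

section
/- Let x ∈ ℓ₂⁺ with S₂ = ∑ x_i² and t < 1/S₂. Then for fixed i ≠ j, the expected number of simple paths from i to j in the random graph G_t (edge {u,v} with probability 1 − exp(−t x_u x_v), independently) is at most x_i x_j t / (1 − t S₂); in particular, it is finite, so a.s. only finitely many simple paths join i and j. -/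
open MeasureTheory ProbabilityTheory
open scoped ENNReal

/-- The set of (intermediate-vertex lists of) simple paths from `i` to `j` in `G`. -/
def simplePathsBetween (G : SimpleGraph ℕ) (i j : ℕ) : Set (List ℕ) :=
  {l | (i :: (l ++ [j])).Chain' G.Adj ∧ (i :: (l ++ [j])).Nodup}

/-!
A simple path `i, v₁, …, v_{k-1}, j` uses `k` distinct edges; these are present independently, each
with probability `1 - exp (-t x_u x_v) ≤ t x_u x_v`. So the path is present with probability at most
`t x_i x_j · ∏ₘ t x_{vₘ}²`, and summing this over all tuples of intermediate vertices gives the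
geometric series `t x_i x_j ∑ₖ (t S₂)ᵏ`. The expected number of paths is the sum of these
probabilities, and since it is finite the first Borel–Cantelli lemma shows that almost surely only
finitely many paths are present.
-/

namespace ENNReal

theorem tsum_pi_fin_prod_eq_pow {α : Type*} (f : α → ℝ≥0∞) :
    ∀ n : ℕ, ∑' g : Fin n → α, ∏ i, f (g i) = (∑' a, f a) ^ n
  | 0 => by simp
  | n + 1 => by
    rw [← (Fin.consEquiv fun _ => α).tsum_eq, ENNReal.tsum_prod']
    simp [Fin.consEquiv, Fin.prod_univ_succ, ENNReal.tsum_mul_left, ENNReal.tsum_mul_right,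
      tsum_pi_fin_prod_eq_pow f n, pow_succ']

theorem tsum_list_prod_map_s18 {α : Type*} (f : α → ℝ≥0∞) :
    ∑' l : List α, (l.map f).prod = (1 - ∑' a, f a)⁻¹ := by
  rw [← List.equivSigmaTuple.symm.tsum_eq, ENNReal.tsum_sigma', ← ENNReal.tsum_geometric]
  refine tsum_congr fun n => ?_
  simp [List.map_ofFn, List.prod_ofFn, tsum_pi_fin_prod_eq_pow]

end ENNReal

theorem ProbabilityTheory.iIndepSet.meas_biInter_of_subtype {Ω ι : Type*} [MeasurableSpace Ω]
    {μ : Measure Ω} {p : ι → Prop} (A : ι → Set Ω) (h : iIndepSet (fun i : Subtype p => A i) μ)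
    (S : Finset ι) (hS : ∀ i ∈ S, p i) :
    μ (⋂ i ∈ S, A i) = ∏ i ∈ S, μ (A i) := by
  classical
  rw [← Finset.prod_subtype_of_mem (fun i => μ (A i)) hS, ← h.meas_biInter]
  congr 1
  ext ω
  simp only [Set.mem_iInter, Finset.mem_subtype, Subtype.forall]
  exact ⟨fun h i _ hi => h i hi, fun h i hi => h i (hS i hi) hi⟩

namespace List

variable {α M : Type*}

def chainWeight [CommMonoid M] (w : α → α → M) : List α → M
  | a :: b :: l => w a b * chainWeight w (b :: l)
  | _ => 1

@[simp]
theorem chainWeight_cons_cons [CommMonoid M] (w : α → α → M) (a b : α) (l : List α) :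
    chainWeight w (a :: b :: l) = w a b * chainWeight w (b :: l) :=
  rfl

variable [LinearOrder α]

def chainEdges : List α → Finset (α × α)
  | a :: b :: l => insert (min a b, max a b) (chainEdges (b :: l))
  | _ => ∅

theorem isChain_adj_iff_forall_mem_chainEdges (G : SimpleGraph α) :
    ∀ l : List α, l.IsChain G.Adj ↔ ∀ p ∈ chainEdges l, G.Adj p.1 p.2
  | [] | [_] => by simp [chainEdges]
  | a :: b :: l => by
    have hab : G.Adj (min a b) (max a b) ↔ G.Adj a b := by
      rcases le_total a b with h | h <;> simp [h, G.adj_comm]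
    simp [chainEdges, isChain_adj_iff_forall_mem_chainEdges G (b :: l), hab]

theorem mem_of_mem_chainEdges : ∀ {l : List α} {p : α × α}, p ∈ chainEdges l → p.1 ∈ l ∧ p.2 ∈ l
  | [], _, h | [_], _, h => by simp [chainEdges] at h
  | a :: b :: l, p, h => by
    rcases Finset.mem_insert.1 h with rfl | h
    · exact ⟨by rcases min_choice a b with h | h <;> simp [h],
        by rcases max_choice a b with h | h <;> simp [h]⟩
    · have := mem_of_mem_chainEdges h
      exact ⟨mem_cons_of_mem a this.1, mem_cons_of_mem a this.2⟩

theorem Nodup.fst_lt_snd_of_mem_chainEdges :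
    ∀ {l : List α}, l.Nodup → ∀ {p : α × α}, p ∈ chainEdges l → p.1 < p.2
  | [], _, _, h | [_], _, _, h => by simp [chainEdges] at h
  | a :: b :: l, hl, p, h => by
    rcases Finset.mem_insert.1 h with rfl | h
    · exact min_lt_max.2 fun hab => by simp [hab] at hl
    · exact hl.of_cons.fst_lt_snd_of_mem_chainEdges h

theorem Nodup.prod_chainEdges [CommMonoid M] (w : α → α → M) (hw : ∀ a b, w a b = w b a) :
    ∀ {l : List α}, l.Nodup → ∏ p ∈ chainEdges l, w p.1 p.2 = chainWeight w l
  | [], _ | [_], _ => rfl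
  | a :: b :: l, hl => by
    have hnew : (min a b, max a b) ∉ chainEdges (b :: l) := fun h => by
      have := mem_of_mem_chainEdges h
      rcases min_choice a b with hm | hm <;> rcases max_choice a b with hM | hM <;> simp_all
    have hab : w (min a b) (max a b) = w a b := by
      rcases le_total a b with h | h <;> simp [h, hw]
    rw [chainEdges, Finset.prod_insert hnew, hl.of_cons.prod_chainEdges w hw, hab,
      chainWeight_cons_cons]

end List

theorem MeasureTheory.lintegral_tsum_one_le_tsum_measure {Ω ι : Type*} [MeasurableSpace Ω]
    [Countable ι] (μ : Measure Ω) (S : Ω → Set ι) :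
    ∫⁻ ω, ∑' _ : S ω, (1 : ℝ≥0∞) ∂μ ≤ ∑' i, μ {ω | i ∈ S ω} := by
  -- the events `{ω | i ∈ S ω}` need not be measurable, so we pass to measurable hulls
  calc ∫⁻ ω, ∑' _ : S ω, (1 : ℝ≥0∞) ∂μ
      ≤ ∫⁻ ω, ∑' i, (toMeasurable μ {ω | i ∈ S ω}).indicator 1 ω ∂μ := by
        refine lintegral_mono fun ω => ?_
        rw [tsum_subtype (S ω) fun _ => (1 : ℝ≥0∞)]
        refine ENNReal.tsum_le_tsum fun i => ?_
        by_cases hi : i ∈ S ω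
        · rw [Set.indicator_of_mem hi, Set.indicator_of_mem (subset_toMeasurable μ _ hi)]
          exact le_rfl
        · simp [hi]
    _ = ∑' i, μ {ω | i ∈ S ω} := by
        rw [lintegral_tsum fun i =>
          (measurable_one.indicator (measurableSet_toMeasurable _ _)).aemeasurable]
        simp [lintegral_indicator_one (measurableSet_toMeasurable _ _), measure_toMeasurable]

section RandomGraph

variable {Ω : Type*} [MeasurableSpace Ω] {μ : Measure Ω} {G : Ω → SimpleGraph ℕ} {x : ℕ → ℝ}
  {t : ℝ}

theorem measure_isChain_adj_le
    (hprob : ∀ i j : ℕ, i < j →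
      μ {ω | (G ω).Adj i j} = ENNReal.ofReal (1 - Real.exp (-(t * x i * x j))))
    (hindep : iIndepSet
      (fun p : {p : ℕ × ℕ // p.1 < p.2} => {ω | (G ω).Adj p.1.1 p.1.2}) μ)
    {l : List ℕ} (hl : l.Nodup) :
    μ {ω | l.IsChain (G ω).Adj} ≤ l.chainWeight fun a b => ENNReal.ofReal (t * x a * x b) := by
  have hevent : {ω | l.IsChain (G ω).Adj} = ⋂ p ∈ l.chainEdges, {ω | (G ω).Adj p.1 p.2} := by
    ext ω
    simp [List.isChain_adj_iff_forall_mem_chainEdges]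
  rw [hevent, hindep.meas_biInter_of_subtype (fun p => {ω | (G ω).Adj p.1 p.2}) _
      fun p => hl.fst_lt_snd_of_mem_chainEdges,
    ← hl.prod_chainEdges _ fun a b => by rw [mul_right_comm]]
  refine Finset.prod_le_prod' fun p hp => ?_
  rw [hprob _ _ (hl.fst_lt_snd_of_mem_chainEdges hp)]
  exact ENNReal.ofReal_le_ofReal (by linarith [Real.add_one_le_exp (-(t * x p.1 * x p.2))])

theorem chainWeight_cons_append_singleton (ht : 0 ≤ t) (hx : ∀ i, 0 ≤ x i) (j : ℕ) :
    ∀ (l : List ℕ) (a : ℕ),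
      (a :: (l ++ [j])).chainWeight (fun a b => ENNReal.ofReal (t * x a * x b)) =
        ENNReal.ofReal (t * x a * x j) * (l.map fun v => ENNReal.ofReal (t * x v ^ 2)).prod
  | [], a => by simp [List.chainWeight]
  | v :: l, a => by
    have hw : ∀ a b, 0 ≤ t * x a * x b := fun a b => mul_nonneg (mul_nonneg ht (hx a)) (hx b)
    rw [List.cons_append, List.chainWeight_cons_cons,
      chainWeight_cons_append_singleton ht hx j l v, List.map_cons, List.prod_cons, ← mul_assoc,
      ← mul_assoc, ← ENNReal.ofReal_mul (hw a v), ← ENNReal.ofReal_mul (hw a j)]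
    ring_nf

theorem tsum_chainWeight_cons_append_singleton (ht : 0 ≤ t) (hx : ∀ i, 0 ≤ x i)
    (hx2 : Summable fun i => x i ^ 2) (a j : ℕ) :
    ∑' l : List ℕ, (a :: (l ++ [j])).chainWeight (fun a b => ENNReal.ofReal (t * x a * x b)) =
      ENNReal.ofReal (t * x a * x j) * (1 - ENNReal.ofReal (t * ∑' i, x i ^ 2))⁻¹ := by
  simp_rw [chainWeight_cons_append_singleton ht hx, ENNReal.tsum_mul_left,
    ENNReal.tsum_list_prod_map_s18, ← ENNReal.ofReal_tsum_of_nonneg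
      (fun v => mul_nonneg ht (sq_nonneg (x v))) (hx2.mul_left t), tsum_mul_left]

theorem measure_mem_simplePathsBetween_le
    (hprob : ∀ i j : ℕ, i < j →
      μ {ω | (G ω).Adj i j} = ENNReal.ofReal (1 - Real.exp (-(t * x i * x j))))
    (hindep : iIndepSet
      (fun p : {p : ℕ × ℕ // p.1 < p.2} => {ω | (G ω).Adj p.1.1 p.1.2}) μ)
    (i j : ℕ) (l : List ℕ) :
    μ {ω | l ∈ simplePathsBetween (G ω) i j} ≤
      (i :: (l ++ [j])).chainWeight fun a b => ENNReal.ofReal (t * x a * x b) := by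
  by_cases hl : (i :: (l ++ [j])).Nodup
  · exact (measure_mono fun ω hω => hω.1).trans (measure_isChain_adj_le hprob hindep hl)
  · have hempty : {ω | l ∈ simplePathsBetween (G ω) i j} = ∅ :=
      Set.eq_empty_of_forall_notMem fun ω hω => hl hω.2
    simp [hempty]

end RandomGraph

theorem stmt18_general {Ω : Type*} [MeasurableSpace Ω] (μ : Measure Ω) [IsProbabilityMeasure μ]
    (x : ℕ → ℝ) (hx : ∀ i, 0 ≤ x i) (hx2 : Summable fun i => x i ^ 2)
    (t : ℝ) (ht : 0 ≤ t) (hts : t * (∑' i, x i ^ 2) < 1)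
    (G : Ω → SimpleGraph ℕ)
    (hprob : ∀ i j : ℕ, i < j →
      μ {ω | (G ω).Adj i j} = ENNReal.ofReal (1 - Real.exp (-(t * x i * x j))))
    (hindep : iIndepSet
      (fun p : {p : ℕ × ℕ // p.1 < p.2} => {ω | (G ω).Adj p.1.1 p.1.2}) μ)
    (i j : ℕ) :
    (∫⁻ ω, ∑' _ : (simplePathsBetween (G ω) i j), (1 : ℝ≥0∞) ∂μ) ≤
        ENNReal.ofReal (x i * x j * t / (1 - t * ∑' i, x i ^ 2)) ∧
      μ {ω | (simplePathsBetween (G ω) i j).Finite} = 1 := by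
  have hS : 0 ≤ t * ∑' i, x i ^ 2 := mul_nonneg ht (tsum_nonneg fun i => sq_nonneg (x i))
  have hsum : ∑' l : List ℕ, μ {ω | l ∈ simplePathsBetween (G ω) i j} ≤
      ENNReal.ofReal (x i * x j * t / (1 - t * ∑' i, x i ^ 2)) := calc
    _ ≤ _ := ENNReal.tsum_le_tsum (measure_mem_simplePathsBetween_le hprob hindep i j)
    _ = ENNReal.ofReal (t * x i * x j) * (1 - ENNReal.ofReal (t * ∑' i, x i ^ 2))⁻¹ :=
      tsum_chainWeight_cons_append_singleton ht hx hx2 i j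
    _ = _ := by
      rw [← ENNReal.ofReal_one, ← ENNReal.ofReal_sub _ hS,
        ← ENNReal.ofReal_inv_of_pos (by linarith),
        ← ENNReal.ofReal_mul (mul_nonneg (mul_nonneg ht (hx i)) (hx j)), div_eq_mul_inv]
      ring_nf
  refine ⟨(lintegral_tsum_one_le_tsum_measure μ _).trans hsum, ?_⟩
  have hfin : ∀ᵐ ω ∂μ, (simplePathsBetween (G ω) i j).Finite :=
    ae_finite_setOfPred_mem (ne_top_of_le_ne_top ENNReal.ofReal_ne_top hsum)
  rw [measure_congr (ae_eq_univ.2 hfin), measure_univ]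

/-- For `t < 1/S₂`, the expected number of simple paths from `i` to `j` in the random
graph `G_t` is at most `x_i x_j t / (1 - t S₂)`; in particular it is finite, so a.s.
only finitely many simple paths join `i` and `j`. -/
theorem stmt18 {Ω : Type*} [MeasurableSpace Ω] (μ : Measure Ω) [IsProbabilityMeasure μ]
    (x : ℕ → ℝ) (hx : ∀ i, 0 ≤ x i) (hx2 : Summable fun i => x i ^ 2)
    (t : ℝ) (ht : 0 ≤ t) (hts : t * (∑' i, x i ^ 2) < 1)
    (G : Ω → SimpleGraph ℕ)
    (hprob : ∀ i j : ℕ, i < j →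
      μ {ω | (G ω).Adj i j} = ENNReal.ofReal (1 - Real.exp (-(t * x i * x j))))
    (hindep : iIndepSet
      (fun p : {p : ℕ × ℕ // p.1 < p.2} => {ω | (G ω).Adj p.1.1 p.1.2}) μ)
    (i j : ℕ) (hij : i ≠ j) :
    (∫⁻ ω, ∑' _ : (simplePathsBetween (G ω) i j), (1 : ℝ≥0∞) ∂μ) ≤
        ENNReal.ofReal (x i * x j * t / (1 - t * ∑' i, x i ^ 2)) ∧
      μ {ω | (simplePathsBetween (G ω) i j).Finite} = 1 :=
  stmt18_general μ x hx hx2 t ht hts G hprob hindep i j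
end
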